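/- arXiv:2207.13824 — 2 statements merged into one kernel-verified Lean document; each statement's English description precedes it below -/
import Mathlib

section
/- Let a, b be positive real numbers. The FARO loss L(Z, Ẑ) = min over all permutations σ of {1, …, K} of H_G(Z, Ẑ∘σ) satisfies the triangle inequality: for all binary matrices Z₁, Z₂, Z₃ ∈ {0,1}^{n×K}, L(Z₁, Z₂) + L(Z₂, Z₃) ≥ L(Z₁, Z₃). -/
/-- The generalized Hamming distance between binary matrices `Z, Ẑ ∈ {0,1}^{n×K}`
with penalty parameters `a, b`. -/
noncomputable def genHamming {n K : ℕ} (a b : ℝ) (Z Zhat : Fin n → Fin K → Bool) : ℝ :=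
  ∑ i : Fin n, ∑ j : Fin K,
    ((if Z i j = true ∧ Zhat i j = false then a else 0) +
     (if Z i j = false ∧ Zhat i j = true then b else 0))

/-- FARO loss: the minimum generalized Hamming distance over all column
permutations of `Ẑ`. -/
noncomputable def faroLoss {n K : ℕ} (a b : ℝ) (Z Zhat : Fin n → Fin K → Bool) : ℝ :=
  Finset.univ.inf' Finset.univ_nonempty
    fun σ : Equiv.Perm (Fin K) => genHamming a b Z (fun i j => Zhat i (σ j))

lemma genHamming_triangle {n K : ℕ} (a b : ℝ) (ha : 0 < a) (hb : 0 < b)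
    (X Y W : Fin n → Fin K → Bool) :
    genHamming a b X W ≤ genHamming a b X Y + genHamming a b Y W := by
  unfold genHamming
  rw [← Finset.sum_add_distrib]
  refine Finset.sum_le_sum fun i _ => ?_
  rw [← Finset.sum_add_distrib]
  refine Finset.sum_le_sum fun j _ => ?_
  rcases Bool.eq_false_or_eq_true (X i j) with hx | hx <;>
  rcases Bool.eq_false_or_eq_true (Y i j) with hy | hy <;>
  rcases Bool.eq_false_or_eq_true (W i j) with hw | hw <;>
  simp [hx, hy, hw] <;> positivity

lemma genHamming_perm {n K : ℕ} (a b : ℝ) (X Y : Fin n → Fin K → Bool)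
    (σ : Equiv.Perm (Fin K)) :
    genHamming a b (fun i j => X i (σ j)) (fun i j => Y i (σ j)) = genHamming a b X Y := by
  unfold genHamming
  refine Finset.sum_congr rfl fun i _ => ?_
  exact Fintype.sum_equiv σ _ _ (fun j => rfl)

/-- FARO loss satisfies the triangle inequality. -/
theorem faroLoss_triangle {n K : ℕ} (a b : ℝ) (ha : 0 < a) (hb : 0 < b)
    (Z₁ Z₂ Z₃ : Fin n → Fin K → Bool) :
    faroLoss a b Z₁ Z₃ ≤ faroLoss a b Z₁ Z₂ + faroLoss a b Z₂ Z₃ := by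
  obtain ⟨σ, -, hσ⟩ := Finset.exists_mem_eq_inf' (Finset.univ_nonempty (α := Equiv.Perm (Fin K)))
    (fun σ : Equiv.Perm (Fin K) => genHamming a b Z₁ (fun i j => Z₂ i (σ j)))
  obtain ⟨τ, -, hτ⟩ := Finset.exists_mem_eq_inf' (Finset.univ_nonempty (α := Equiv.Perm (Fin K)))
    (fun τ : Equiv.Perm (Fin K) => genHamming a b Z₂ (fun i j => Z₃ i (τ j)))
  have h1 : faroLoss a b Z₁ Z₃ ≤ genHamming a b Z₁ (fun i j => Z₃ i (τ (σ j))) := by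
    have := Finset.inf'_le
      (fun π : Equiv.Perm (Fin K) => genHamming a b Z₁ (fun i j => Z₃ i (π j)))
      (Finset.mem_univ (σ.trans τ))
    exact this
  have h2 : genHamming a b Z₁ (fun i j => Z₃ i (τ (σ j))) ≤
      genHamming a b Z₁ (fun i j => Z₂ i (σ j)) +
      genHamming a b (fun i j => Z₂ i (σ j)) (fun i j => Z₃ i (τ (σ j))) :=
    genHamming_triangle a b ha hb _ _ _
  have h3 : genHamming a b (fun i j => Z₂ i (σ j)) (fun i j => Z₃ i (τ (σ j))) =
      genHamming a b Z₂ (fun i j => Z₃ i (τ j)) :=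
    genHamming_perm a b Z₂ (fun i j => Z₃ i (τ j)) σ
  have e1 : faroLoss a b Z₁ Z₂ = genHamming a b Z₁ (fun i j => Z₂ i (σ j)) := hσ
  have e2 : faroLoss a b Z₂ Z₃ = genHamming a b Z₂ (fun i j => Z₃ i (τ j)) := hτ
  rw [e1, e2]
  linarith [h1, h2, h3.le]
end

section
/- A feature allocation matrix is not determined by its adjacency matrix: there exist binary matrices Z₁ ∈ {0,1}^{6×3} and Z₂ ∈ {0,1}^{6×4}, viewed as integer matrices, such that Z₁Z₁ᵀ = Z₂Z₂ᵀ as 6×6 integer matrices, yet Z₂ is not equal to any column permutation of the matrix obtained from Z₁ by appending a column of zeros. Concretely, one may take Z₁ with rows (0,0,0), (1,0,1), (0,1,1), (1,0,1), (1,1,0), (1,1,0) and Z₂ with rows (0,0,0,0), (0,0,1,1), (0,1,1,0), (0,0,1,1), (1,0,1,0), (1,0,1,0). -/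
/-- The concrete binary matrix `Z₁ ∈ {0,1}^{6×3}` (entries viewed as integers). -/
def Zone : Matrix (Fin 6) (Fin 3) ℤ :=
  !![0, 0, 0;
     1, 0, 1;
     0, 1, 1;
     1, 0, 1;
     1, 1, 0;
     1, 1, 0]

/-- The concrete binary matrix `Z₂ ∈ {0,1}^{6×4}` (entries viewed as integers). -/
def Ztwo : Matrix (Fin 6) (Fin 4) ℤ :=
  !![0, 0, 0, 0;
     0, 0, 1, 1;
     0, 1, 1, 0;
     0, 0, 1, 1;
     1, 0, 1, 0;
     1, 0, 1, 0]

/-- `Z₁` with a column of zeros appended, yielding a `6×4` matrix. -/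
def ZoneAug : Matrix (Fin 6) (Fin 4) ℤ :=
  fun i j => if h : (j : ℕ) < 3 then Zone i ⟨(j : ℕ), h⟩ else 0

/-- A feature allocation matrix is not determined by its adjacency matrix:
`Z₁` and `Z₂` are binary matrices with `Z₁Z₁ᵀ = Z₂Z₂ᵀ`, yet `Z₂` is not a column
permutation of `Z₁` augmented with a column of zeros. -/
theorem feature_allocation_not_determined_by_adjacency :
    (∀ i j, Zone i j = 0 ∨ Zone i j = 1) ∧
    (∀ i j, Ztwo i j = 0 ∨ Ztwo i j = 1) ∧
    Zone * Zone.transpose = Ztwo * Ztwo.transpose ∧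
    ¬ ∃ σ : Equiv.Perm (Fin 4), ∀ i j, Ztwo i j = ZoneAug i (σ j) := by
  refine ⟨?_, ?_, by decide, ?_⟩
  · intro i j; fin_cases i <;> fin_cases j <;> simp [Zone]
  · intro i j; fin_cases i <;> fin_cases j <;> simp [Ztwo]
  · rintro ⟨σ, h⟩
    have h1 := h 1 0
    have h2 := h 2 0
    have h4 := h 4 0
    generalize σ 0 = k at h1 h2 h4
    fin_cases k <;> simp [Ztwo, ZoneAug, Zone] at h1 h2 h4
end
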